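/- arXiv:1004.1420 — 4 statements merged into one kernel-verified Lean document; each statement's English description precedes it below -/
import Mathlib

section
/- The m-th power Ω^m of the element Ω = Σ_{s=1}^{m} c_{[1,2s−1]} ∧ c_{2s} is a nonzero element of the top exterior power ⋀^{2m}U. -/
/-!
Setup: `U = ℚ^{2m}` with basis `c_1, …, c_{2m}` (1-based indexing), and
`Ω = Σ_{s=1}^{m} c_{[1,2s−1]} ∧ c_{2s}` in the exterior algebra `⋀ U`, where
`c_{[1,2s−1]} = c_1 + c_3 + ⋯ + c_{2s−1}`.
-/

noncomputable section

/-- 1-based standard basis vector `c_i` of `ℚ^n`. -/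
def bas (n i : ℕ) : Fin n → ℚ := fun j => if (j : ℕ) + 1 = i then 1 else 0

/-- The class `Ω = Σ_{s=1}^{m} c_{[1,2s−1]} ∧ c_{2s}`.  (Below `s ∈ {0, …, m-1}`
stands for the paper's `s + 1`, so `c_{[1,2s-1]}` becomes `∑_{j<s+1} c_{2j+1}` and
`c_{2s}` becomes `c_{2s+2}`.) -/
def Omega (m : ℕ) : ExteriorAlgebra ℚ (Fin (2 * m) → ℚ) :=
  ∑ s ∈ Finset.range m,
    ExteriorAlgebra.ι ℚ (∑ j ∈ Finset.range (s + 1), bas (2 * m) (2 * j + 1)) *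
      ExteriorAlgebra.ι ℚ (bas (2 * m) (2 * s + 2))

/-!
The summands `x_s = c_{[1,2s-1]} ∧ c_{2s}` of `Ω` have even degree, so they commute, and each
squares to zero; hence `Ω^m = m! • x_1 ⋯ x_m`. The product is triangular: `x_1 ⋯ x_{s-1}` equals
`c_1 ∧ ⋯ ∧ c_{2s-2}`, which already contains every `c_{2j-1}` with `j < s`, so multiplying by
`x_s` only keeps `c_{2s-1} ∧ c_{2s}`. Thus `Ω^m = m! • c_1 ∧ ⋯ ∧ c_{2m}`, and the determinant
functional sends this to `m! ≠ 0`.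
-/

open Finset

theorem Commute.add_pow_succ_of_mul_self_eq_zero {R : Type*} [Semiring R] {a b : R}
    (h : Commute a b) (ha : a * a = 0) (n : ℕ) :
    (a + b) ^ (n + 1) = b ^ (n + 1) + (n + 1) • (a * b ^ n) := by
  have hvanish : ∀ k ∈ range n, a ^ (k + 1 + 1) * b ^ (n + 1 - (k + 1 + 1)) *
      ((n + 1).choose (k + 1 + 1) : R) = 0 := fun k _ => by
    rw [pow_succ, pow_succ, mul_assoc _ a a, ha, mul_zero, zero_mul, zero_mul]
  rw [h.add_pow, sum_range_succ', sum_range_succ', sum_eq_zero hvanish]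
  simp only [zero_add, pow_zero, pow_one, one_mul, mul_one, Nat.sub_zero, Nat.add_sub_cancel,
    Nat.choose_zero_right, Nat.choose_one_right, Nat.cast_one]
  rw [add_comm, nsmul_eq_mul']

section SquareZero

variable {R : Type*} [Semiring R] {x : ℕ → R}

theorem sum_range_pow_eq_zero_of_lt (hcomm : ∀ i j, Commute (x i) (x j))
    (hsq : ∀ i, x i * x i = 0) {k n : ℕ} (hkn : k < n) :
    (∑ i ∈ range k, x i) ^ n = 0 := by
  induction k generalizing n with
  | zero => simp [zero_pow hkn.ne']
  | succ k ih =>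
    obtain ⟨n, rfl⟩ : ∃ n', n = n' + 1 := ⟨n - 1, by omega⟩
    have hk : Commute (x k) (∑ i ∈ range k, x i) := .sum_right _ _ _ fun i _ => hcomm k i
    rw [sum_range_succ, add_comm, hk.add_pow_succ_of_mul_self_eq_zero (hsq k),
      ih (by omega), ih (by omega), mul_zero, smul_zero, add_zero]

theorem sum_range_pow_self (hcomm : ∀ i j, Commute (x i) (x j))
    (hsq : ∀ i, x i * x i = 0) (k : ℕ) :
    (∑ i ∈ range k, x i) ^ k = k.factorial • ((List.range k).map x).prod := by
  induction k with
  | zero => simp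
  | succ k ih =>
    have hk : Commute (x k) (∑ i ∈ range k, x i) := .sum_right _ _ _ fun i _ => hcomm k i
    have hprod : Commute (x k) ((List.range k).map x).prod :=
      .list_prod_right _ _ fun y hy => by
        obtain ⟨i, -, rfl⟩ := List.mem_map.mp hy
        exact hcomm k i
    rw [sum_range_succ, add_comm, hk.add_pow_succ_of_mul_self_eq_zero (hsq k),
      sum_range_pow_eq_zero_of_lt hcomm hsq k.lt_succ_self, zero_add, ih, mul_smul_comm,
      smul_smul, hprod.eq, List.prod_range_succ, Nat.factorial_succ]

end SquareZero

namespace ExteriorAlgebra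

variable {R M : Type*} [CommRing R] [AddCommGroup M] [Module R M]

theorem ιMulti_snoc {n : ℕ} (v : Fin n → M) (a : M) :
    ιMulti R (n + 1) (Fin.snoc v a) = ιMulti R n v * ι R a := by
  simp only [ιMulti_apply, List.ofFn_succ', List.prod_concat, Fin.snoc_castSucc, Fin.snoc_last]

theorem ιMulti_mul_ι_self {n : ℕ} (v : Fin n → M) (i : Fin n) :
    ιMulti R n v * ι R (v i) = 0 := by
  rw [← ιMulti_snoc]
  refine ιMulti_eq_zero_of_not_inj fun hinj => ?_
  exact (Fin.castSucc_lt_last i).ne (hinj (by simp))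

theorem ι_mul_ι_mul_ι_comm (a b c : M) :
    ι R a * ι R b * ι R c = ι R c * (ι R a * ι R b) := by
  have hswap : ∀ u v : M, ι R u * ι R v = -(ι R v * ι R u) := fun u v =>
    eq_neg_of_add_eq_zero_left (ι_add_mul_swap u v)
  rw [mul_assoc, hswap b c, mul_neg, ← mul_assoc, hswap a c, neg_mul, neg_neg, mul_assoc]

theorem commute_ι_mul_ι (a b c d : M) : Commute (ι R a * ι R b) (ι R c * ι R d) := by
  show ι R a * ι R b * (ι R c * ι R d) = ι R c * ι R d * (ι R a * ι R b)
  rw [← mul_assoc, ι_mul_ι_mul_ι_comm, mul_assoc, ι_mul_ι_mul_ι_comm, ← mul_assoc]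

theorem ι_mul_ι_mul_self_eq_zero (a b : M) : ι R a * ι R b * (ι R a * ι R b) = 0 := by
  rw [← mul_assoc, ι_mul_ι_mul_ι_comm, ← mul_assoc, ι_sq_zero, zero_mul, zero_mul]

variable (R) in
/-- With `e i = c_{i+1}` this is the summand `c_{[1,2s+1]} ∧ c_{2s+2}` of `Ω`. -/
def staircaseTerm (e : ℕ → M) (s : ℕ) : ExteriorAlgebra R M :=
  ι R (∑ j ∈ range (s + 1), e (2 * j)) * ι R (e (2 * s + 1))

theorem list_prod_staircaseTerm (e : ℕ → M) (k : ℕ) :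
    ((List.range k).map (staircaseTerm R e)).prod = ιMulti R (2 * k) (fun i => e i) := by
  induction k with
  | zero => simp
  | succ k ih =>
    have hsnoc : ∀ n, ιMulti R (n + 1) (fun i => e i) = ιMulti R n (fun i => e i) * ι R (e n) :=
      fun n => by
        rw [← ιMulti_snoc]
        congr 1
        ext i
        refine Fin.lastCases ?_ (fun j => ?_) i <;> simp
    have hlower : ∀ j ∈ range k, ιMulti R (2 * k) (fun i => e i) * ι R (e (2 * j)) = 0 :=
      fun j hj => ιMulti_mul_ι_self (fun i : Fin (2 * k) => e i) ⟨2 * j, by simp at hj; omega⟩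
    rw [List.prod_range_succ, ih, staircaseTerm, ← mul_assoc, map_sum, mul_sum, sum_range_succ,
      sum_eq_zero hlower, zero_add, ← hsnoc, ← hsnoc]
    rfl

theorem ιMulti_basis_ne_zero [Nontrivial R] {n : ℕ} (b : Module.Basis (Fin n) R M) :
    ιMulti R n b ≠ 0 := fun h => by
  rw [← exteriorPower.ιMulti_apply_coe, ZeroMemClass.coe_eq_zero] at h
  simpa [Module.Basis.det_self] using congr_arg (exteriorPower.alternatingMapLinearEquiv b.det) h

end ExteriorAlgebra

open ExteriorAlgebra in
theorem Omega_pow_ne_zero_general (m : ℕ) :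
    Omega m ^ m ≠ 0 ∧ Omega m ^ m ∈ ⋀[ℚ]^(2 * m) (Fin (2 * m) → ℚ) := by
  let e : ℕ → Fin (2 * m) → ℚ := fun i => bas (2 * m) (i + 1)
  have hΩ : Omega m = ∑ s ∈ range m, staircaseTerm ℚ e s := rfl
  have he : (fun i : Fin (2 * m) => e i) = Pi.basisFun ℚ (Fin (2 * m)) := by
    ext i j
    simp [e, bas, Pi.single_apply, Fin.ext_iff, eq_comm]
  have hpow : Omega m ^ m = m.factorial • ιMulti ℚ (2 * m) (Pi.basisFun ℚ (Fin (2 * m))) := by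
    rw [hΩ, sum_range_pow_self (x := staircaseTerm ℚ e) (fun _ _ => commute_ι_mul_ι _ _ _ _)
      (fun _ => ι_mul_ι_mul_self_eq_zero _ _), list_prod_staircaseTerm, he]
  rw [hpow, ← Nat.cast_smul_eq_nsmul ℚ]
  exact ⟨smul_ne_zero (by positivity) (ιMulti_basis_ne_zero _),
    Submodule.smul_mem _ _ (ιMulti_range ℚ _ ⟨_, rfl⟩)⟩

/-- `Ω^m` is a nonzero element of the top exterior power `⋀^{2m} U`. -/
theorem Omega_pow_ne_zero (m : ℕ) (hm : 1 ≤ m) :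
    Omega m ^ m ≠ 0 ∧ Omega m ^ m ∈ ⋀[ℚ]^(2 * m) (Fin (2 * m) → ℚ) :=
  Omega_pow_ne_zero_general m
end
end

section
/- (Non-mixing lemma, Lemma 1.4.7, in its linear-algebra form.) Let 0 ≤ p ≤ f and let u ∈ Σ_{i+2j ≤ p} Q^{i,j}. If η^{f−p+1}(u) = 0, then u ∈ Q^{p,0}. -/
/-!
Write `u = m + c` with `c ∈ Q^{p,0}` and `m` in the sum of the `Q^{i,j}` with `i + j < p`
(every `(i,j) ≠ (p,0)` with `i + 2j ≤ p` has `i + j < p`). Put `N = f − p + 1`. Then `η^N` maps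
each such `Q^{i,j}` injectively into `Q^{i,j+N}`, whose second index exceeds `f − p`, whereas by
(b) `η^N c = η(η^{f−p} c)` lies in the sum of the `Q^{k,l}` with `l ≤ f − p`. As
`η^N m = −η^N c`, independence of the decomposition forces `η^N m = 0`; and since the shifted
summands `Q^{i,j+N}` are again independent, `η^N` is injective on the sum containing `m`, so `m = 0`.
-/

open Function LinearMap

theorem iSupIndep.disjoint_iSup_ker {ι κ R M N : Type*} [Ring R] [AddCommGroup M] [Module R M]
    [AddCommGroup N] [Module R N] {E : κ → Submodule R N} (hE : iSupIndep E) {σ : ι → κ}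
    (hσ : Injective σ) {D : ι → Submodule R M} {g : M →ₗ[R] N}
    (hmaps : ∀ i, (D i).map g ≤ E (σ i)) (hinj : ∀ i, Disjoint (D i) (ker g)) :
    Disjoint (⨆ i, D i) (ker g) := by
  refine Submodule.disjoint_def.mpr fun x hx hgx => ?_
  obtain ⟨v, hv, rfl⟩ := (Submodule.mem_iSup_iff_exists_finsupp D x).mp hx
  have hgv : ∀ i ∈ v.support, g (v i) = 0 :=
    (iSupIndep_iff_finsetSum_eq_zero_imp_eq_zero _).mp (hE.comp hσ) v.support (fun i => g (v i))
      (fun i _ => hmaps i (Submodule.mem_map_of_mem (hv i)))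
      (by simpa only [Finsupp.sum, map_sum, mem_ker] using hgx)
  exact Finset.sum_eq_zero fun i hi =>
    Submodule.disjoint_def.mp (hinj i) _ (hv i) (hgv i hi)

namespace Module.End

variable {R M : Type*} [Ring R] [AddCommGroup M] [Module R M]

theorem map_map_pow (g : Module.End R M) (V : Submodule R M) (j n : ℕ) :
    (V.map (g ^ j)).map (g ^ n) = V.map (g ^ (j + n)) := by
  rw [← Submodule.map_comp, ← Module.End.mul_eq_comp, ← pow_add, add_comm]

theorem disjoint_map_pow_ker_pow {g : Module.End R M} {V : Submodule R M} {j n : ℕ}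
    (hV : Disjoint V (ker (g ^ (j + n)))) : Disjoint (V.map (g ^ j)) (ker (g ^ n)) := by
  refine Submodule.disjoint_def.mpr ?_
  rintro _ ⟨v, hv, rfl⟩ hgv
  have : (g ^ (j + n)) v = 0 := by rwa [add_comm, pow_add, Module.End.mul_apply]
  rw [Submodule.disjoint_def.mp hV v hv this, map_zero]

end Module.End

theorem iSupIndep.disjoint_iSup_le_iSup_lt {ι α β : Type*} [CompleteLattice α]
    [IsModularLattice α] [IsCompactlyGenerated α] [LinearOrder β] {t : ι → α} (ht : iSupIndep t)
    (g : ι → β) (b : β) : Disjoint (⨆ (i) (_ : g i ≤ b), t i) (⨆ (i) (_ : b < g i), t i) :=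
  ht.disjoint_biSup_biSup (s := {i | g i ≤ b}) (t := {i | b < g i})
    (Set.disjoint_left.mpr fun _ h h' => not_lt.mpr h h')

theorem iSup_le_iSup_lt_sup {α : Type*} [CompleteLattice α] (Q : ℕ → ℕ → α) {f p : ℕ} :
    ⨆ (i : ℕ) (j : ℕ) (_ : i ≤ f ∧ j ≤ f - i ∧ i + 2 * j ≤ p), Q i j ≤
      (⨆ q : {q : ℕ × ℕ // q.1 + q.2 < p}, Q q.1.1 q.1.2) ⊔ Q p 0 := by
  refine iSup_le fun i => iSup_le fun j => iSup_le fun h => ?_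
  by_cases hij : i = p ∧ j = 0
  · obtain ⟨rfl, rfl⟩ := hij
    exact le_sup_right
  · exact le_sup_of_le_left <| le_iSup_of_le ⟨(i, j), by omega⟩ le_rfl

abbrev DeligneIndex (f : ℕ) : Type := {q : ℕ × ℕ // q.1 ≤ f ∧ q.2 ≤ f - q.1}

def shiftIndex {f p : ℕ} (hp : p ≤ f) (q : {q : ℕ × ℕ // q.1 + q.2 < p}) :
    DeligneIndex f :=
  ⟨(q.1.1, q.1.2 + (f - p + 1)), by omega⟩

theorem shiftIndex_injective {f p : ℕ} (hp : p ≤ f) : Injective (shiftIndex hp) := by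
  intro q q' h
  have h' := congrArg Subtype.val h
  simp only [shiftIndex, Prod.mk.injEq, add_left_inj] at h'
  exact Subtype.ext (Prod.ext h'.1 h'.2)

section Lefschetz

variable {R H : Type*} [Ring R] [AddCommGroup H] [Module R H] {f p : ℕ}
  {Q : ℕ → ℕ → Submodule R H} {η : Module.End R H}

variable (f Q η) in
def IsLefschetzLadder : Prop :=
  ∀ i ≤ f, ∀ j ≤ f - i,
    Submodule.map (η ^ j) (Q i 0) = Q i j ∧ ∀ x ∈ Q i 0, (η ^ j) x = 0 → x = 0

namespace IsLefschetzLadder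

theorem map_pow (ha : IsLefschetzLadder f Q η) {i j n : ℕ} (hi : i ≤ f) (hjn : j + n ≤ f - i) :
    (Q i j).map (η ^ n) = Q i (j + n) := by
  rw [← (ha i hi j (by omega)).1, Module.End.map_map_pow, (ha i hi (j + n) hjn).1]

theorem disjoint_ker_pow (ha : IsLefschetzLadder f Q η) {i j n : ℕ} (hi : i ≤ f)
    (hjn : j + n ≤ f - i) : Disjoint (Q i j) (ker (η ^ n)) := by
  rw [← (ha i hi j (by omega)).1]
  exact Module.End.disjoint_map_pow_ker_pow (Submodule.disjoint_def.mpr (ha i hi (j + n) hjn).2)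

theorem map_pow_shiftIndex (ha : IsLefschetzLadder f Q η) (hp : p ≤ f)
    (q : {q : ℕ × ℕ // q.1 + q.2 < p}) :
    (Q q.1.1 q.1.2).map (η ^ (f - p + 1)) = Q (shiftIndex hp q).1.1 (shiftIndex hp q).1.2 :=
  ha.map_pow (by omega) (by omega)

theorem map_pow_iSup_lt_le (ha : IsLefschetzLadder f Q η) (hp : p ≤ f) :
    (⨆ q : {q : ℕ × ℕ // q.1 + q.2 < p}, Q q.1.1 q.1.2).map (η ^ (f - p + 1)) ≤
      ⨆ (q : DeligneIndex f) (_ : f - p < q.1.2), Q q.1.1 q.1.2 := by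
  rw [Submodule.map_iSup]
  refine iSup_le fun q => (ha.map_pow_shiftIndex hp q).le.trans ?_
  exact le_biSup (fun q : DeligneIndex f => Q q.1.1 q.1.2)
    (show f - p < q.1.2 + (f - p + 1) by omega)

theorem disjoint_iSup_lt_ker_pow (ha : IsLefschetzLadder f Q η)
    (hind : iSupIndep fun q : DeligneIndex f => Q q.1.1 q.1.2)
    (hp : p ≤ f) :
    Disjoint (⨆ q : {q : ℕ × ℕ // q.1 + q.2 < p}, Q q.1.1 q.1.2) (ker (η ^ (f - p + 1))) :=
  hind.disjoint_iSup_ker (shiftIndex_injective hp) (fun q => (ha.map_pow_shiftIndex hp q).le)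
    fun q => ha.disjoint_ker_pow (by omega) (by omega)

theorem pow_mem_iSup_le (ha : IsLefschetzLadder f Q η)
    (hp : p ≤ f) (hb : ∀ x ∈ Q p (f - p),
      η x ∈ ⨆ (k : ℕ) (_ : k ≤ f) (l : ℕ) (_ : l ≤ min (f - p) (f - k)), Q k l) {x : H} (hx : x ∈ Q p 0) :
    (η ^ (f - p + 1)) x ∈
      ⨆ (q : DeligneIndex f) (_ : q.1.2 ≤ f - p), Q q.1.1 q.1.2 := by
  have hle : ⨆ (k : ℕ) (_ : k ≤ f) (l : ℕ) (_ : l ≤ min (f - p) (f - k)), Q k l ≤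
      ⨆ (q : DeligneIndex f) (_ : q.1.2 ≤ f - p), Q q.1.1 q.1.2 :=
    iSup_le fun k => iSup_le fun hk => iSup_le fun l => iSup_le fun hl =>
      le_biSup (fun q : DeligneIndex f => Q q.1.1 q.1.2)
        (i := ⟨(k, l), hk, by omega⟩) (show l ≤ f - p by omega)
  rw [pow_succ', Module.End.mul_apply]
  exact hle (hb _ ((ha p hp (f - p) le_rfl).1 ▸ Submodule.mem_map_of_mem hx))

end IsLefschetzLadder

end Lefschetz

theorem non_mixing_general (H : Type*) [AddCommGroup H] [Module ℚ H]
    (f : ℕ) (Q : ℕ → ℕ → Submodule ℚ H)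
    (hdec : DirectSum.IsInternal
      (fun q : {q : ℕ × ℕ // q.1 ≤ f ∧ q.2 ≤ f - q.1} => Q q.1.1 q.1.2))
    (η : H →ₗ[ℚ] H)
    (ha : ∀ i ≤ f, ∀ j ≤ f - i,
      Submodule.map (η ^ j) (Q i 0) = Q i j ∧ ∀ x ∈ Q i 0, (η ^ j) x = 0 → x = 0)
    (hb : ∀ i ≤ f, ∀ x ∈ Q i (f - i),
      η x ∈ ⨆ (k : ℕ) (_ : k ≤ f) (l : ℕ) (_ : l ≤ min (f - i) (f - k)), Q k l)
    (p : ℕ) (hp : p ≤ f) (u : H)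
    (hu : u ∈ ⨆ (i : ℕ) (j : ℕ) (_ : i ≤ f ∧ j ≤ f - i ∧ i + 2 * j ≤ p), Q i j)
    (hη : (η ^ (f - p + 1)) u = 0) :
    u ∈ Q p 0 := by
  have ha : IsLefschetzLadder f Q η := ha
  have hind := hdec.submodule_iSupIndep
  obtain ⟨m, hm, c, hc, rfl⟩ := Submodule.mem_sup.mp (iSup_le_iSup_lt_sup Q hu)
  have hneg : (η ^ (f - p + 1)) m = -(η ^ (f - p + 1)) c := by
    rw [eq_neg_iff_add_eq_zero, ← map_add, hη]
  have hc_low := ha.pow_mem_iSup_le hp (hb p hp) hc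
  have hm_high := ha.map_pow_iSup_lt_le hp (Submodule.mem_map_of_mem hm)
  have hmN : (η ^ (f - p + 1)) m = 0 :=
    Submodule.disjoint_def.mp (hind.disjoint_iSup_le_iSup_lt (fun q => q.1.2) (f - p)) _
      (hneg ▸ Submodule.neg_mem _ hc_low) hm_high
  rwa [Submodule.disjoint_def.mp (ha.disjoint_iSup_lt_ker_pow hind hp) m hm hmN, zero_add]

theorem non_mixing (H : Type*) [AddCommGroup H] [Module ℚ H]
    [FiniteDimensional ℚ H] (f : ℕ) (Q : ℕ → ℕ → Submodule ℚ H)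
    (hdec : DirectSum.IsInternal
      (fun q : {q : ℕ × ℕ // q.1 ≤ f ∧ q.2 ≤ f - q.1} => Q q.1.1 q.1.2))
    (η : H →ₗ[ℚ] H)
    (ha : ∀ i ≤ f, ∀ j ≤ f - i,
      Submodule.map (η ^ j) (Q i 0) = Q i j ∧ ∀ x ∈ Q i 0, (η ^ j) x = 0 → x = 0)
    (hb : ∀ i ≤ f, ∀ x ∈ Q i (f - i),
      η x ∈ ⨆ (k : ℕ) (_ : k ≤ f) (l : ℕ) (_ : l ≤ min (f - i) (f - k)), Q k l)
    (p : ℕ) (hp : p ≤ f) (u : H)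
    (hu : u ∈ ⨆ (i : ℕ) (j : ℕ) (_ : i ≤ f ∧ j ≤ f - i ∧ i + 2 * j ≤ p), Q i j)
    (hη : (η ^ (f - p + 1)) u = 0) :
    u ∈ Q p 0 :=
  non_mixing_general H f Q hdec η ha hb p hp u hu hη
end

section
/- If b ≥ 1 and s, t ≥ 0 are integers with 2s + 2t ≥ 2a − 2 + b, then the monomial β^s·γ^t belongs to the ideal I^a_b of ℚ[α, β, γ]. (This is the commutative-algebra content of Proposition 1.2.4(1) together with Remark 1.2.5: combined with the presentation of the cohomology ring it yields β^s ψ^{t̲} = 0 for 2s + t ≥ deg D.) -/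
/-!
Proposition 1.2.4(1) + Remark 1.2.5, commutative-algebra content: in
`ℚ[α, β, γ]` (here `α = X 0`, `β = X 1`, `γ = X 2`), if `b ≥ 1` and
`2s + 2t ≥ 2a − 2 + b` (as integers), then `β^s γ^t` lies in the ideal `I^a_b`
generated by `γ^{a+1}` and the relations `ρ^c_{r,s,t}` with
`c = r + 3s + 2t − 2a + 2 − b`, for `r + 3s + 3t > 3a − 3 + b` and
`r + 2s + 2t ≥ 2a − 2 + b` (as integers).
-/

noncomputable section

open MvPolynomial

/-- `ρ^c_{r,s,t} := Σ_{i=0}^{min(c,r,s)} (α^{r−i}/(r−i)!) (β^{s−i}/(s−i)!) ((2γ)^{t+i}/i!)`. -/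
def rho (r s t c : ℕ) : MvPolynomial (Fin 3) ℚ :=
  ∑ i ∈ Finset.range (min c (min r s) + 1),
    C ((Nat.factorial (r - i) : ℚ)⁻¹ * (Nat.factorial (s - i) : ℚ)⁻¹ *
        (2 ^ (t + i) / (Nat.factorial i : ℚ))) *
      X 0 ^ (r - i) * X 1 ^ (s - i) * X 2 ^ (t + i)

/-- The ideal `I^a_b` of `ℚ[α, β, γ]`. -/
def Iab (a b : ℕ) : Ideal (MvPolynomial (Fin 3) ℚ) :=
  Ideal.span ({X 2 ^ (a + 1)} ∪
    {p | ∃ r s t c : ℕ,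
      ((r : ℤ) + 3 * s + 3 * t > 3 * (a : ℤ) - 3 + b) ∧
      ((r : ℤ) + 2 * s + 2 * t ≥ 2 * (a : ℤ) - 2 + b) ∧
      ((c : ℤ) = (r : ℤ) + 3 * s + 2 * t - 2 * a + 2 - b) ∧
      p = rho r s t c})

theorem rho_zero_left (s t c : ℕ) :
    rho 0 s t c = C ((s.factorial : ℚ)⁻¹ * 2 ^ t) * (X 1 ^ s * X 2 ^ t) := by
  simp only [rho, Nat.zero_min, Nat.min_zero, zero_add, Finset.sum_range_one, zero_tsub,
    tsub_zero, add_zero, Nat.factorial_zero, Nat.cast_one, inv_one, one_mul, div_one, pow_zero,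
    mul_one, C_mul, C_pow]
  ring

theorem rho_mem_Iab {a b r s t c : ℕ}
    (h₁ : (r : ℤ) + 3 * s + 3 * t > 3 * (a : ℤ) - 3 + b)
    (h₂ : (r : ℤ) + 2 * s + 2 * t ≥ 2 * (a : ℤ) - 2 + b)
    (hc : (c : ℤ) = (r : ℤ) + 3 * s + 2 * t - 2 * a + 2 - b) :
    rho r s t c ∈ Iab a b :=
  Ideal.subset_span (Or.inr ⟨r, s, t, c, h₁, h₂, hc, rfl⟩)

-- Take `r = 0`: then `b ≥ 1` turns `2s + 2t ≥ 2a − 2 + b` into the strict inequality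
-- `3s + 3t > 3a − 3 + b`.
theorem beta_gamma_mem_Iab (a b s t : ℕ) (hb : 1 ≤ b)
    (h : 2 * (s : ℤ) + 2 * t ≥ 2 * (a : ℤ) - 2 + b) :
    X 1 ^ s * X 2 ^ t ∈ Iab a b := by
  have hunit : IsUnit (C ((s.factorial : ℚ)⁻¹ * 2 ^ t) : MvPolynomial (Fin 3) ℚ) :=
    (isUnit_iff_ne_zero.mpr (by positivity)).map C
  rw [← Ideal.unit_mul_mem_iff_mem _ hunit, ← rho_zero_left s t (3 * s + 2 * t + 2 - (2 * a + b))]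
  exact rho_mem_Iab (by push_cast; omega) (by push_cast; omega) (by push_cast; omega)

end
end

section
/- Every 2×2 complex matrix C satisfying C·A_i = A_i·C and C·B_i = B_i·C for all i = 1, …, g is a scalar multiple of the identity matrix. (This is the Schur-type statement underlying the freeness of the PGL₂(ℂ)-action on the representation space defining the twisted character variety.) -/
/-!
If `C` is not scalar, then `C - c • 1` is a nonzero `2 × 2` matrix, so an eigenvector `v` of `C`
for `c` spans its kernel. Every matrix commuting with `C` preserves that kernel, hence has `v` as
an eigenvector; as eigenvalues on the line `K ∙ v` multiply, each commutator
`A_i⁻¹ B_i⁻¹ A_i B_i` fixes `v`, and so does their product `-1`, which forces `v = 0`.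
-/

open Module Matrix

theorem LinearMap.ker_eq_span_singleton_of_finrank_eq_two {K V W : Type*} [Field K]
    [AddCommGroup V] [Module K V] [AddCommGroup W] [Module K W] (hV : finrank K V = 2)
    {f : V →ₗ[K] W} (hf : f ≠ 0) {v : V} (hv : v ≠ 0) (hfv : f v = 0) :
    ker f = Submodule.span K {v} := by
  have : FiniteDimensional K V := Module.finite_of_finrank_eq_succ hV
  have hker : finrank K (ker f) < 2 := hV ▸ Submodule.finrank_lt (mt ker_eq_top.mp hf)
  refine (Submodule.eq_of_le_of_finrank_le ?_ ?_).symm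
  · rwa [Submodule.span_singleton_le_iff_mem]
  · rw [finrank_span_singleton hv]
    omega

namespace Matrix

variable {K : Type*} [Field K]

theorem exists_mulVec_eq_smul_of_commute {C M : Matrix (Fin 2) (Fin 2) K} {c : K}
    {v : Fin 2 → K} (hC : C ≠ c • 1) (hv : v ≠ 0) (hCv : C *ᵥ v = c • v)
    (hCM : Commute C M) : ∃ a : K, M *ᵥ v = a • v := by
  have hN : toLin' (C - c • 1) ≠ 0 := by
    rwa [map_ne_zero_iff _ toLin'.injective, sub_ne_zero]
  have hNv : toLin' (C - c • 1) v = 0 := by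
    simp [hCv]
  have hMv : M *ᵥ v ∈ LinearMap.ker (toLin' (C - c • 1)) := by
    rw [LinearMap.mem_ker, toLin'_apply, sub_mulVec, smul_mulVec, one_mulVec, mulVec_mulVec,
      hCM.eq, ← mulVec_mulVec, hCv, mulVec_smul, sub_self]
  rw [LinearMap.ker_eq_span_singleton_of_finrank_eq_two (by simp) hN hv hNv,
    Submodule.mem_span_singleton] at hMv
  obtain ⟨a, ha⟩ := hMv
  exact ⟨a, ha.symm⟩

variable {n : Type*} [Fintype n] [DecidableEq n]

theorem inv_mulVec_mulVec {M : Matrix n n K} (hM : IsUnit M) (v : n → K) :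
    M⁻¹ *ᵥ (M *ᵥ v) = v := by
  rw [mulVec_mulVec, nonsing_inv_mul _ ((isUnit_iff_isUnit_det M).mp hM), one_mulVec]

theorem inv_mulVec_eq_inv_smul {M : Matrix n n K} (hM : IsUnit M) {v : n → K} {a : K}
    (hMv : M *ᵥ v = a • v) : M⁻¹ *ᵥ v = a⁻¹ • v := by
  have hv : v = a • M⁻¹ *ᵥ v := by
    rw [← mulVec_smul, ← hMv, inv_mulVec_mulVec hM]
  rcases eq_or_ne a 0 with rfl | ha
  · rw [zero_smul] at hv
    simp [hv]
  · rw [hv, smul_smul, inv_mul_cancel₀ ha, one_smul, ← hv]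

theorem commutator_mulVec_eq_self {M N : Matrix n n K} (hM : IsUnit M) (hN : IsUnit N)
    {v : n → K} {a b : K} (hMv : M *ᵥ v = a • v) (hNv : N *ᵥ v = b • v) :
    (M⁻¹ * N⁻¹ * M * N) *ᵥ v = v := by
  rcases eq_or_ne v 0 with rfl | hv
  · exact mulVec_zero _
  have ha : a ≠ 0 := by
    rintro rfl
    exact hv (by rw [← inv_mulVec_mulVec hM v, hMv, zero_smul, mulVec_zero])
  have hb : b ≠ 0 := by
    rintro rfl
    exact hv (by rw [← inv_mulVec_mulVec hN v, hNv, zero_smul, mulVec_zero])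
  simp only [← mulVec_mulVec, hNv, hMv, mulVec_smul, inv_mulVec_eq_inv_smul hM hMv,
    inv_mulVec_eq_inv_smul hN hNv, smul_smul]
  rw [show b * (a * (b⁻¹ * a⁻¹)) = 1 by field_simp, one_smul]

end Matrix

theorem commutant_is_scalar_general (g : ℕ)
    (A B : ℕ → Matrix (Fin 2) (Fin 2) ℂ)
    (hA : ∀ i, 1 ≤ i → i ≤ g → IsUnit (A i))
    (hB : ∀ i, 1 ≤ i → i ≤ g → IsUnit (B i))
    (hrel : ((List.range g).map
        (fun i => (A (i + 1))⁻¹ * (B (i + 1))⁻¹ * A (i + 1) * B (i + 1))).prod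
      = -1)
    (C : Matrix (Fin 2) (Fin 2) ℂ)
    (hCA : ∀ i, 1 ≤ i → i ≤ g → C * A i = A i * C)
    (hCB : ∀ i, 1 ≤ i → i ≤ g → C * B i = B i * C) :
    ∃ c : ℂ, C = c • (1 : Matrix (Fin 2) (Fin 2) ℂ) := by
  obtain ⟨c, hc⟩ := Module.End.exists_eigenvalue (toLin' C)
  obtain ⟨v, hv⟩ := hc.exists_hasEigenvector
  have hCv : C *ᵥ v = c • v := by simpa using hv.apply_eq_smul
  by_contra! hC
  have hfix : ∀ M ∈ (List.range g).map
      (fun i => (A (i + 1))⁻¹ * (B (i + 1))⁻¹ * A (i + 1) * B (i + 1)), M *ᵥ v = v := by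
    simp only [List.mem_map, List.mem_range, forall_exists_index, and_imp]
    rintro _ i hi rfl
    obtain ⟨a, haA⟩ := exists_mulVec_eq_smul_of_commute (hC c) hv.2 hCv (hCA _ le_add_self hi)
    obtain ⟨b, hbB⟩ := exists_mulVec_eq_smul_of_commute (hC c) hv.2 hCv (hCB _ le_add_self hi)
    exact commutator_mulVec_eq_self (hA _ le_add_self hi) (hB _ le_add_self hi) haA hbB
  have hprod := List.prod_induction (fun M => M *ᵥ v = v)
    (fun M N hM hN => by rw [← mulVec_mulVec, hN, hM]) (one_mulVec v) hfix
  rw [hrel, neg_mulVec, one_mulVec, neg_eq_iff_add_eq_zero, ← two_smul ℂ, smul_eq_zero] at hprod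
  exact hv.2 (hprod.resolve_left two_ne_zero)

theorem commutant_is_scalar (g : ℕ) (hg : 1 ≤ g)
    (A B : ℕ → Matrix (Fin 2) (Fin 2) ℂ)
    (hA : ∀ i, 1 ≤ i → i ≤ g → IsUnit (A i))
    (hB : ∀ i, 1 ≤ i → i ≤ g → IsUnit (B i))
    (hrel : ((List.range g).map
        (fun i => (A (i + 1))⁻¹ * (B (i + 1))⁻¹ * A (i + 1) * B (i + 1))).prod
      = -1)
    (C : Matrix (Fin 2) (Fin 2) ℂ)
    (hCA : ∀ i, 1 ≤ i → i ≤ g → C * A i = A i * C)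
    (hCB : ∀ i, 1 ≤ i → i ≤ g → C * B i = B i * C) :
    ∃ c : ℂ, C = c • (1 : Matrix (Fin 2) (Fin 2) ℂ) :=
  commutant_is_scalar_general g A B hA hB hrel C hCA hCB
end
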